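/- For every interval I of ℕ, the functional I*(x) = ∑_{n∈I} x(n) defines an element of J* with ‖I*‖_{J*} = 1. -/

import Mathlib

open Filter Topology Classical

noncomputable section

/-- Admissible finite families of pairwise disjoint, increasingly ordered intervals
`[f i .1, f i .2]` of `ℕ`. -/
def Admissible (n : ℕ) (f : Fin n → ℕ × ℕ) : Prop :=
  (∀ i, (f i).1 ≤ (f i).2) ∧ ∀ i j : Fin n, i < j → (f i).2 < (f j).1

/-- The set of estimates appearing in the definition of the James norm. -/
def estimates (x : ℕ → ℝ) : Set ℝ :=
  {r | ∃ n, ∃ f : Fin n → ℕ × ℕ, Admissible n f ∧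
    r = Real.sqrt (∑ i, (∑ k ∈ Finset.Icc (f i).1 (f i).2, x k) ^ 2)}

/-- `x` belongs to the James space `J`. -/
def MemJ (x : ℕ → ℝ) : Prop := BddAbove (estimates x)

/-- The James norm. -/
def jamesNorm (x : ℕ → ℝ) : ℝ := sSup (estimates x)

/-- The ℓ² norm. -/
def l2Norm (x : ℕ → ℝ) : ℝ := Real.sqrt (∑' k, (x k) ^ 2)

/-- The closed unit ball of the James space. -/
def ballJ : Set (ℕ → ℝ) := {x | MemJ x ∧ jamesNorm x ≤ 1}

/-- The support of a sequence. -/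
def supp (x : ℕ → ℝ) : Set ℕ := {n | x n ≠ 0}

/-- The (possibly infinite) sum of `x` over a subset `I` of `ℕ`,
as the limit of the partial sums. -/
def setSum (x : ℕ → ℝ) (I : Set ℕ) : ℝ :=
  limUnder atTop (fun N => ∑ k ∈ Finset.range N, if k ∈ I then x k else 0)

/-- An `x`-norming family: a (finite or infinite) family of pairwise disjoint
nonempty intervals of `ℕ`, indexed by an initial segment `F` of `ℕ`, ordered
increasingly, whose interval sums exist and realize the James norm of `x`. -/
structure NormingFamily (x : ℕ → ℝ) where
  F : Set ℕ
  F_nonempty : F.Nonempty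
  initial : ∀ ⦃m n : ℕ⦄, m ≤ n → n ∈ F → m ∈ F
  I : ℕ → Set ℕ
  I_nonempty : ∀ i ∈ F, (I i).Nonempty
  I_interval : ∀ i ∈ F, (I i).OrdConnected
  ordered : ∀ i ∈ F, ∀ j ∈ F, i < j → ∀ a ∈ I i, ∀ b ∈ I j, a < b
  sums_exist : ∀ i ∈ F, ∃ l : ℝ,
    Tendsto (fun N => ∑ k ∈ Finset.range N, if k ∈ I i then x k else 0) atTop (𝓝 l)
  norming : ∑' i : F, (setSum x (I i)) ^ 2 = (jamesNorm x) ^ 2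

/-- An `x`-norming partition: an `x`-norming family whose intervals cover the
support of `x`, every interval has its minimum in the support, every non-final
interval has its maximum in the support, and the final interval does not extend
beyond the supremum of the support. -/
structure NormingPartition (x : ℕ → ℝ) extends NormingFamily x where
  covers : supp x ⊆ ⋃ i ∈ F, I i
  min_in_supp : ∀ i ∈ F, ∃ m ∈ I i ∩ supp x, ∀ k ∈ I i, m ≤ k
  max_in_supp : ∀ i ∈ F, (∃ j ∈ F, i < j) → ∃ m ∈ I i ∩ supp x, ∀ k ∈ I i, k ≤ m
  bounded_by_supp : ∀ i ∈ F, ∀ k ∈ I i, ∃ m ∈ supp x, k ≤ m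

/-- `n₁ < n₂` are consecutive elements of the support of `x`. -/
def Consecutive (x : ℕ → ℝ) (n₁ n₂ : ℕ) : Prop :=
  n₁ ∈ supp x ∧ n₂ ∈ supp x ∧ n₁ < n₂ ∧ ∀ k, n₁ < k → k < n₂ → x k = 0

end

/-!
Restricting `x` to an interval `I` does not increase the James norm: cutting every interval of
an admissible family down to its intersection with `I` gives an admissible family for `x`. For
any `y ∈ J` the partial sums `∑_{k<N} y k` are Cauchy, since otherwise there are `n` consecutive
blocks whose sums have modulus at least `ε`, giving an estimate `≥ √n ε` for every `n`. Each
partial sum is a single interval sum, hence of modulus at most `‖y‖_J`; so `|I*(x)| ≤ ‖x‖_J`,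
and the unit vector at a point of `I` attains the value `1`.
-/

open Finset

theorem Finset.eq_Icc_min'_max' {α : Type*} [LinearOrder α] [LocallyFiniteOrder α]
    {T : Finset α} (hT : (T : Set α).OrdConnected) (hne : T.Nonempty) :
    T = Icc (T.min' hne) (T.max' hne) := by
  ext k
  refine ⟨fun hk => mem_Icc.2 ⟨T.min'_le k hk, T.le_max' k hk⟩, fun hk => ?_⟩
  exact hT.out (T.min'_mem hne) (T.max'_mem hne) (mem_Icc.1 hk)

section JamesNorm

variable {x : ℕ → ℝ} {I : Set ℕ}

theorem zero_mem_estimates (x : ℕ → ℝ) : (0 : ℝ) ∈ estimates x :=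
  ⟨0, Fin.elim0, ⟨fun i => i.elim0, fun i => i.elim0⟩, by simp⟩

theorem jamesNorm_nonneg (hx : MemJ x) : 0 ≤ jamesNorm x :=
  le_csSup hx (zero_mem_estimates x)

theorem abs_sum_Icc_le_jamesNorm (hx : MemJ x) {a b : ℕ} (hab : a ≤ b) :
    |∑ k ∈ Icc a b, x k| ≤ jamesNorm x := by
  refine le_csSup hx ⟨1, fun _ => (a, b), ⟨fun _ => hab, fun i j hij => ?_⟩, ?_⟩
  · exact absurd (Subsingleton.elim i j) hij.ne
  · rw [Fin.sum_univ_one, Real.sqrt_sq_eq_abs]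

theorem abs_sum_range_le_jamesNorm (hx : MemJ x) (N : ℕ) :
    |∑ k ∈ range N, x k| ≤ jamesNorm x := by
  cases N with
  | zero => simpa using jamesNorm_nonneg hx
  | succ n =>
    rw [range_eq_Ico, Ico_add_one_right_eq_Icc]
    exact abs_sum_Icc_le_jamesNorm hx n.zero_le

theorem sum_sq_blocks_le_jamesNorm_sq (hx : MemJ x) {g : ℕ → ℕ} (hg : StrictMono g) (n : ℕ) :
    ∑ i ∈ range n, (∑ k ∈ Ico (g i) (g (i + 1)), x k) ^ 2 ≤ jamesNorm x ^ 2 := by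
  let f : Fin n → ℕ × ℕ := fun i => (g i, g (i + 1) - 1)
  have hf : Admissible n f := by
    refine ⟨fun i => ?_, fun i j hij => ?_⟩
    · have := hg (Nat.lt_add_one (i : ℕ))
      simp only [f]
      omega
    · have := hg.monotone (show (i : ℕ) + 1 ≤ j from hij)
      have := hg (Nat.lt_add_one (i : ℕ))
      simp only [f]
      omega
  have hblock : ∀ i : ℕ, Icc (g i) (g (i + 1) - 1) = Ico (g i) (g (i + 1)) := fun i =>
    Icc_sub_one_right_eq_Ico_of_not_isMin (not_isMin_of_lt (hg (Nat.lt_add_one i))) _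
  have := le_csSup hx ⟨n, f, hf, rfl⟩
  simp only [f, hblock,
    Fin.sum_univ_eq_sum_range (fun i => (∑ k ∈ Ico (g i) (g (i + 1)), x k) ^ 2)] at this
  exact (Real.sqrt_le_left (jamesNorm_nonneg hx)).1 this

theorem cauchySeq_partialSums (hx : MemJ x) : CauchySeq fun N => ∑ k ∈ range N, x k := by
  set S := fun N => ∑ k ∈ range N, x k
  by_contra hS
  obtain ⟨ε, hε, hjump⟩ : ∃ ε > 0, ∀ N, ∃ n ≥ N, ε ≤ dist (S n) (S N) := by
    simpa [Metric.cauchySeq_iff'] using hS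
  choose next hnext_ge hnext_dist using hjump
  have hnext_gt (N : ℕ) : N < next N := by
    refine (hnext_ge N).lt_of_ne fun h => ?_
    have := hnext_dist N
    rw [← h, dist_self] at this
    linarith
  let g : ℕ → ℕ := fun i => next^[i] 0
  have hg : StrictMono g := strictMono_nat_of_lt_succ fun i => by
    simp only [g, Function.iterate_succ_apply']
    exact hnext_gt _
  have hblock (i : ℕ) : ε ^ 2 ≤ (∑ k ∈ Ico (g i) (g (i + 1)), x k) ^ 2 := by
    have : g (i + 1) = next (g i) := Function.iterate_succ_apply' _ _ _
    calc ε ^ 2 ≤ dist (S (g (i + 1))) (S (g i)) ^ 2 :=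
          pow_le_pow_left₀ hε.le (this ▸ hnext_dist (g i)) 2
      _ = _ := by rw [Real.dist_eq, sq_abs, sum_Ico_eq_sub _ (hg (Nat.lt_add_one i)).le]
  obtain ⟨n, hn⟩ := exists_nat_gt (jamesNorm x ^ 2 / ε ^ 2)
  have : n * ε ^ 2 ≤ jamesNorm x ^ 2 := calc
    n * ε ^ 2 = ∑ _i ∈ range n, ε ^ 2 := by simp
    _ ≤ ∑ i ∈ range n, (∑ k ∈ Ico (g i) (g (i + 1)), x k) ^ 2 := sum_le_sum fun i _ => hblock i
    _ ≤ jamesNorm x ^ 2 := sum_sq_blocks_le_jamesNorm_sq hx hg n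
  rw [div_lt_iff₀ (by positivity)] at hn
  linarith

theorem exists_tendsto_partialSums_abs_le (hx : MemJ x) :
    ∃ l, Tendsto (fun N => ∑ k ∈ range N, x k) atTop (𝓝 l) ∧ |l| ≤ jamesNorm x := by
  obtain ⟨l, hl⟩ := cauchySeq_tendsto_of_complete (cauchySeq_partialSums hx)
  exact ⟨l, hl, le_of_tendsto hl.abs (Eventually.of_forall (abs_sum_range_le_jamesNorm hx))⟩

theorem exists_Icc_subset_sq_sum_indicator_le (x : ℕ → ℝ) (hI : I.OrdConnected)
    {a b : ℕ} (hab : a ≤ b) :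
    ∃ a' b', a ≤ a' ∧ a' ≤ b' ∧ b' ≤ b ∧
      (∑ k ∈ Icc a b, I.indicator x k) ^ 2 ≤ (∑ k ∈ Icc a' b', x k) ^ 2 := by
  let T := (Icc a b).filter (· ∈ I)
  have hsum : ∑ k ∈ Icc a b, I.indicator x k = ∑ k ∈ T, x k := by
    simp only [T, sum_filter, Set.indicator_apply]
  rcases T.eq_empty_or_nonempty with hT | hT
  · exact ⟨a, b, le_rfl, hab, le_rfl, by simp [hsum, hT, sq_nonneg]⟩
  have hTI : (T : Set ℕ).OrdConnected := by
    have : (T : Set ℕ) = Set.Icc a b ∩ I := by ext; simp [T]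
    exact this ▸ Set.ordConnected_Icc.inter hI
  have hmin := (mem_Icc.1 (mem_filter.1 (T.min'_mem hT)).1).1
  have hmax := (mem_Icc.1 (mem_filter.1 (T.max'_mem hT)).1).2
  refine ⟨T.min' hT, T.max' hT, hmin, T.min'_le_max' hT, hmax, ?_⟩
  rw [hsum, ← T.eq_Icc_min'_max' hTI hT]

theorem le_jamesNorm_of_mem_estimates_indicator (hx : MemJ x) (hI : I.OrdConnected)
    {r : ℝ} (hr : r ∈ estimates (I.indicator x)) : r ≤ jamesNorm x := by
  obtain ⟨n, f, ⟨hf_le, hf_lt⟩, rfl⟩ := hr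
  choose a' b' ha' hab' hb' hsq using
    fun i => exists_Icc_subset_sq_sum_indicator_le x hI (hf_le i)
  refine le_trans ?_ (le_csSup hx ⟨n, fun i => (a' i, b' i), ⟨hab', fun i j hij => ?_⟩, rfl⟩)
  · exact Real.sqrt_le_sqrt (sum_le_sum fun i _ => hsq i)
  · exact (hb' i).trans_lt ((hf_lt i j hij).trans_le (ha' j))

theorem MemJ.indicator (hx : MemJ x) (hI : I.OrdConnected) :
    MemJ (I.indicator x) :=
  ⟨_, fun _ => le_jamesNorm_of_mem_estimates_indicator hx hI⟩

theorem jamesNorm_indicator_le (hx : MemJ x) (hI : I.OrdConnected) :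
    jamesNorm (I.indicator x) ≤ jamesNorm x :=
  csSup_le ⟨0, zero_mem_estimates _⟩ fun _ => le_jamesNorm_of_mem_estimates_indicator hx hI

theorem setSum_eq_of_tendsto {l : ℝ}
    (h : Tendsto (fun N => ∑ k ∈ range N, I.indicator x k) atTop (𝓝 l)) : setSum x I = l := by
  simp only [Set.indicator_apply] at h
  exact h.limUnder_eq

theorem abs_setSum_le_jamesNorm (hx : MemJ x) (hI : I.OrdConnected) :
    |setSum x I| ≤ jamesNorm x := by
  obtain ⟨l, hl, hlJ⟩ := exists_tendsto_partialSums_abs_le (hx.indicator hI)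
  rw [setSum_eq_of_tendsto hl]
  exact hlJ.trans (jamesNorm_indicator_le hx hI)

end JamesNorm

theorem le_one_of_mem_estimates_single (n₀ : ℕ) {r : ℝ}
    (hr : r ∈ estimates (Pi.single n₀ 1)) : r ≤ 1 := by
  obtain ⟨n, f, ⟨-, hf⟩, rfl⟩ := hr
  simp only [sum_pi_single', ite_pow, one_pow, ne_eq, OfNat.ofNat_ne_zero, not_false_eq_true,
    zero_pow, sum_boole, Real.sqrt_le_one, Nat.cast_le_one]
  refine card_le_one.2 fun i hi j hj => ?_
  simp only [mem_filter, mem_Icc] at hi hj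
  by_contra hij
  rcases lt_or_gt_of_ne hij with h | h
  · have := hf i j h; omega
  · have := hf j i h; omega

theorem memJ_single (n₀ : ℕ) : MemJ (Pi.single n₀ 1) :=
  ⟨1, fun _ => le_one_of_mem_estimates_single n₀⟩

theorem jamesNorm_single_le_one (n₀ : ℕ) : jamesNorm (Pi.single n₀ 1) ≤ 1 :=
  csSup_le ⟨0, zero_mem_estimates _⟩ fun _ => le_one_of_mem_estimates_single n₀

theorem setSum_single_one {I : Set ℕ} {n₀ : ℕ} (hn₀ : n₀ ∈ I) : setSum (Pi.single n₀ 1) I = 1 := by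
  refine setSum_eq_of_tendsto (tendsto_atTop_of_eventually_const (i₀ := n₀ + 1) fun N hN => ?_)
  rw [Set.indicator_eq_self.2 (Pi.support_single_subset.trans (Set.singleton_subset_iff.2 hn₀)),
    sum_pi_single', if_pos (mem_range.2 hN)]

theorem stmt16 (I : Set ℕ) (hne : I.Nonempty) (hI : I.OrdConnected) :
    IsLUB {r : ℝ | ∃ x : ℕ → ℝ, MemJ x ∧ jamesNorm x ≤ 1 ∧ r = |setSum x I|} 1 := by
  obtain ⟨n₀, hn₀⟩ := hne
  refine ⟨?_, fun b hb => hb ?_⟩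
  · rintro r ⟨x, hx, hx₁, rfl⟩
    exact (abs_setSum_le_jamesNorm hx hI).trans hx₁
  · exact ⟨Pi.single n₀ 1, memJ_single n₀, jamesNorm_single_le_one n₀,
      by rw [setSum_single_one hn₀, abs_one]⟩
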